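/- arXiv:1211.1846 — 2 statements merged into one kernel-verified Lean document; each statement's English description precedes it below -/
import Mathlib

section
/- For α ∈ (0,1), (1/2)·∫_ℝ (1 − cos y)/|y|^(α+1) dy = Γ(1−α)·cos(πα/2)/α. -/
/-!
The integrand is even, so it suffices to integrate over `(0, ∞)`. Since
`Γ(α+1) x^(-α-1) = ∫₀^∞ t^α e^(-tx) dt` and the Laplace transform of `1 - cos` is
`1 / (t (1 + t²))`, swapping the two integrals of a nonnegative integrand turns the half-line
integral into `Γ(α+1)⁻¹ ∫₀^∞ t^(α-1) / (1 + t²) dt`. Writing `1 / (1 + t²) = ∫₀^∞ e^(-s(1+t²)) ds`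
and swapping once more gives `Γ(α/2) Γ(1-α/2) / 2` for the latter, and the reflection formula
`Γ(z) Γ(1-z) = π / sin(πz)` at `z = α/2` and `z = α` converts this into the claimed value.
-/

open MeasureTheory Real Set Function

theorem integrable_prod_of_nonneg {X Y : Type*} [MeasurableSpace X] [MeasurableSpace Y]
    {μ : Measure X} {ν : Measure Y} [SFinite ν] {f : X × Y → ℝ}
    (hf : AEStronglyMeasurable f (μ.prod ν))
    (hf_nonneg : ∀ᵐ x ∂μ, ∀ᵐ y ∂ν, 0 ≤ f (x, y))
    (hf_sec : ∀ᵐ x ∂μ, Integrable (fun y ↦ f (x, y)) ν)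
    (hf_int : Integrable (fun x ↦ ∫ y, f (x, y) ∂ν) μ) : Integrable f (μ.prod ν) := by
  refine (integrable_prod_iff hf).2 ⟨hf_sec, hf_int.congr ?_⟩
  filter_upwards [hf_nonneg] with x hx
  exact integral_congr_ae (hx.mono fun y hy ↦ (norm_of_nonneg hy).symm)

theorem integral_Ioi_integral_Ioi_swap_of_nonneg {f : ℝ → ℝ → ℝ}
    (hf : Measurable (uncurry f)) (hf_nonneg : ∀ x > 0, ∀ y > 0, 0 ≤ f x y)
    (hf_sec : ∀ x > 0, IntegrableOn (f x) (Ioi 0))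
    (hf_int : IntegrableOn (fun x ↦ ∫ y in Ioi 0, f x y) (Ioi 0)) :
    IntegrableOn (fun y ↦ ∫ x in Ioi 0, f x y) (Ioi 0) ∧
      ∫ x in Ioi 0, ∫ y in Ioi 0, f x y = ∫ y in Ioi 0, ∫ x in Ioi 0, f x y := by
  have h_prod :
      Integrable (uncurry f) ((volume.restrict (Ioi 0)).prod (volume.restrict (Ioi 0))) :=
    integrable_prod_of_nonneg hf.aestronglyMeasurable
      (ae_restrict_of_forall_mem measurableSet_Ioi fun x hx ↦
        ae_restrict_of_forall_mem measurableSet_Ioi (hf_nonneg x hx))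
      (ae_restrict_of_forall_mem measurableSet_Ioi hf_sec) hf_int
  exact ⟨h_prod.integral_prod_right, integral_integral_swap h_prod⟩

theorem integrableOn_cos_mul_exp_neg_mul_Ioi {t : ℝ} (ht : 0 < t) :
    IntegrableOn (fun x ↦ cos x * exp (-(t * x))) (Ioi 0) := by
  refine (integrableOn_exp_mul_Ioi (neg_neg_of_pos ht) 0).mono' (by fun_prop) ?_
  filter_upwards with x
  rw [norm_mul, norm_of_nonneg (exp_pos _).le, neg_mul]
  exact mul_le_of_le_one_left (exp_pos _).le (abs_cos_le_one x)

theorem integral_cos_mul_exp_neg_mul_Ioi {t : ℝ} (ht : 0 < t) :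
    ∫ x in Ioi 0, cos x * exp (-(t * x)) = t / (1 + t ^ 2) := by
  have ha : (-t + Complex.I).re < 0 := by simpa using ht
  have hre : ∀ x : ℝ, cos x * exp (-(t * x)) = (Complex.exp ((-t + Complex.I) * x)).re := by
    intro x
    simp [Complex.exp_re, mul_comm]
  have h := integral_re (integrableOn_exp_mul_complex_Ioi ha 0)
  rw [integral_exp_mul_complex_Ioi ha 0] at h
  simp_rw [hre, ← RCLike.re_to_complex, h]
  simp [Complex.div_re, Complex.normSq, sq, add_comm]

theorem integral_one_sub_cos_mul_exp_neg_mul_Ioi {t : ℝ} (ht : 0 < t) :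
    ∫ x in Ioi 0, (1 - cos x) * exp (-(t * x)) = 1 / (t * (1 + t ^ 2)) := by
  have hexp : IntegrableOn (fun x ↦ exp (-(t * x))) (Ioi 0) := by
    simpa using integrableOn_exp_mul_Ioi (neg_neg_of_pos ht) 0
  simp_rw [sub_mul, one_mul]
  rw [integral_sub hexp (integrableOn_cos_mul_exp_neg_mul_Ioi ht),
    integral_cos_mul_exp_neg_mul_Ioi ht]
  simp_rw [← neg_mul]
  rw [integral_exp_mul_Ioi (neg_neg_of_pos ht), mul_zero, exp_zero]
  field_simp
  ring

theorem integral_rpow_mul_inv_one_add_sq {α : ℝ} (hα : 0 < α) (hα2 : α < 2) :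
    IntegrableOn (fun t : ℝ ↦ t ^ (α - 1) * (1 + t ^ 2)⁻¹) (Ioi 0) ∧
      ∫ t in Ioi 0, t ^ (α - 1) * (1 + t ^ 2)⁻¹ = Gamma (α / 2) * Gamma (1 - α / 2) / 2 := by
  let f : ℝ → ℝ → ℝ := fun s t ↦ t ^ (α - 1) * exp (-((1 + t ^ 2) * s))
  have hf_eq : ∀ s t : ℝ, f s t = exp (-s) * (t ^ (α - 1) * exp (-s * t ^ (2 : ℝ))) := by
    intro s t
    show t ^ (α - 1) * exp (-((1 + t ^ 2) * s)) = _
    rw [rpow_two, show -((1 + t ^ 2) * s) = -s + -s * t ^ 2 by ring, exp_add]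
    ring
  have h_inner_t : ∀ s > 0,
      ∫ t in Ioi 0, f s t = exp (-s) * s ^ (1 - α / 2 - 1) * (Gamma (α / 2) / 2) := by
    intro s hs
    rw [setIntegral_congr_fun measurableSet_Ioi fun t _ ↦ hf_eq s t, integral_const_mul,
      integral_rpow_mul_exp_neg_mul_rpow two_pos (by linarith) hs]
    ring_nf
  have h_inner_s : ∀ t > 0, ∫ s in Ioi 0, f s t = t ^ (α - 1) * (1 + t ^ 2)⁻¹ := by
    intro t _
    simp_rw [f, ← neg_mul]
    rw [integral_const_mul, integral_exp_mul_Ioi (by nlinarith), mul_zero, exp_zero]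
    field_simp
  have h_sec : ∀ s > 0, IntegrableOn (f s) (Ioi 0) := by
    intro s hs
    exact IntegrableOn.congr_fun ((integrableOn_rpow_mul_exp_neg_mul_rpow (by linarith) two_pos
      hs).const_mul (exp (-s))) (fun t _ ↦ (hf_eq s t).symm) measurableSet_Ioi
  have h_int : IntegrableOn (fun s ↦ ∫ t in Ioi 0, f s t) (Ioi 0) :=
    IntegrableOn.congr_fun ((GammaIntegral_convergent (by linarith : 0 < 1 - α / 2)).mul_const _)
      (fun s hs ↦ (h_inner_t s hs).symm) measurableSet_Ioi
  obtain ⟨h_int', h_swap⟩ := integral_Ioi_integral_Ioi_swap_of_nonneg (f := f) (by fun_prop)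
    (fun s _ t _ ↦ by positivity) h_sec h_int
  refine ⟨h_int'.congr_fun h_inner_s measurableSet_Ioi, ?_⟩
  rw [← setIntegral_congr_fun measurableSet_Ioi h_inner_s, ← h_swap,
    setIntegral_congr_fun measurableSet_Ioi h_inner_t, integral_mul_const,
    ← Gamma_eq_integral (by linarith)]
  ring

theorem integral_one_sub_cos_div_rpow_Ioi {α : ℝ} (hα : 0 < α) (hα2 : α < 2) :
    ∫ x in Ioi 0, (1 - cos x) / x ^ (α + 1)
      = Gamma (α / 2) * Gamma (1 - α / 2) / (2 * Gamma (α + 1)) := by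
  obtain ⟨hJ_int, hJ⟩ := integral_rpow_mul_inv_one_add_sq hα hα2
  let f : ℝ → ℝ → ℝ := fun t x ↦ t ^ α * ((1 - cos x) * exp (-(t * x)))
  have h_inner_x : ∀ t > 0, ∫ x in Ioi 0, f t x = t ^ (α - 1) * (1 + t ^ 2)⁻¹ := by
    intro t ht
    rw [integral_const_mul, integral_one_sub_cos_mul_exp_neg_mul_Ioi ht, rpow_sub_one ht.ne']
    field_simp
  have h_inner_t : ∀ x > 0,
      ∫ t in Ioi 0, f t x = Gamma (α + 1) * ((1 - cos x) / x ^ (α + 1)) := by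
    intro x hx
    have h : ∀ t, f t x = (1 - cos x) * (t ^ (α + 1 - 1) * exp (-(x * t))) := fun t ↦ by
      simp only [f, add_sub_cancel_right, mul_comm x]
      ring
    simp_rw [h]
    rw [integral_const_mul, integral_rpow_mul_exp_neg_mul_Ioi (by linarith) hx,
      div_rpow zero_le_one hx.le, one_rpow]
    ring
  have h_sec : ∀ t > 0, IntegrableOn (f t) (Ioi 0) := fun t ht ↦
    IntegrableOn.congr_fun (((integrableOn_exp_mul_Ioi (neg_neg_of_pos ht) 0).sub
      (integrableOn_cos_mul_exp_neg_mul_Ioi ht)).const_mul (t ^ α))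
      (fun x _ ↦ by simp only [f, neg_mul, Pi.sub_apply]; ring) measurableSet_Ioi
  obtain ⟨-, h_swap⟩ := integral_Ioi_integral_Ioi_swap_of_nonneg (f := f) (by fun_prop)
    (fun t ht x _ ↦ mul_nonneg (rpow_nonneg ht.le α)
      (mul_nonneg (sub_nonneg.2 (cos_le_one x)) (exp_pos _).le))
    h_sec (hJ_int.congr_fun (fun t ht ↦ (h_inner_x t ht).symm) measurableSet_Ioi)
  rw [setIntegral_congr_fun measurableSet_Ioi h_inner_x,
    setIntegral_congr_fun measurableSet_Ioi h_inner_t, integral_const_mul, hJ] at h_swap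
  rw [eq_div_iff (by positivity)]
  linear_combination -2 * h_swap

theorem Gamma_half_mul_Gamma_one_sub_half_div_Gamma_add_one {α : ℝ} (h : sin (π * α) ≠ 0) :
    Gamma (α / 2) * Gamma (1 - α / 2) / (2 * Gamma (α + 1))
      = Gamma (1 - α) * cos (π * α / 2) / α := by
  have hsin2 : sin (π * α) = 2 * sin (π * α / 2) * cos (π * α / 2) := by
    rw [← sin_two_mul]; ring_nf
  have hs : sin (π * α / 2) ≠ 0 := fun h0 ↦ h (by rw [hsin2, h0]; ring)
  have hc : cos (π * α / 2) ≠ 0 := fun h0 ↦ h (by rw [hsin2, h0]; ring)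
  have hα : α ≠ 0 := by rintro rfl; simp at h
  have hΓ := Gamma_mul_Gamma_one_sub α
  have hΓα : Gamma α ≠ 0 := fun h0 ↦ by
    rw [h0, zero_mul, eq_comm, div_eq_zero_iff] at hΓ
    exact hΓ.elim pi_ne_zero h
  have hΓ1 : Gamma (1 - α) = π / sin (π * α) / Gamma α := by
    rw [eq_div_iff hΓα, mul_comm, hΓ]
  rw [Gamma_add_one hα, hΓ1, hsin2, Gamma_mul_Gamma_one_sub (α / 2),
    show π * (α / 2) = π * α / 2 by ring]
  field_simp

/-- For `α ∈ (0,1)`, `(1/2)·∫_ℝ (1 − cos y)/|y|^(α+1) dy = Γ(1−α)·cos(πα/2)/α`. -/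
theorem stmt_3 (α : ℝ) (hα : 0 < α) (hα1 : α < 1) :
    (1 / 2) * ∫ y : ℝ, (1 - Real.cos y) / |y| ^ (α + 1)
      = Real.Gamma (1 - α) * Real.cos (π * α / 2) / α := by
  have h_even : ∫ y : ℝ, (1 - cos y) / |y| ^ (α + 1)
      = 2 * ∫ x in Ioi 0, (1 - cos x) / x ^ (α + 1) := by
    simpa only [cos_abs] using integral_comp_abs (f := fun x ↦ (1 - cos x) / x ^ (α + 1))
  have h_sin : sin (π * α) ≠ 0 :=
    (sin_pos_of_pos_of_lt_pi (by positivity) (by nlinarith [pi_pos])).ne'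
  rw [h_even, integral_one_sub_cos_div_rpow_Ioi hα (by linarith),
    ← Gamma_half_mul_Gamma_one_sub_half_div_Gamma_add_one h_sin]
  ring
end

section
/- For α ∈ (0,1) and ξ ∈ ℝ with ξ ≠ 0, (α/Γ(1−α))·∫_0^∞ (e^{iξy} − 1)·y^(−α−1) dy = −(−iξ)^α, where (−iξ)^α = |ξ|^α·e^{−i(πα/2)·sgn(ξ)}. -/
/-! For `Re z > 0`, integration by parts turns `∫₀^∞ (e^{-zy} - 1) y^{-α-1} dy` into
`-(z/α) ∫₀^∞ e^{-zy} y^{-α} dy`, and `∫₀^∞ e^{-zy} y^r dy = Γ(r+1) z^{-(r+1)}`: for real `z` this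
is a rescaled Gamma integral, and both sides are holomorphic on the half-plane, so the identity
theorem extends it. Hence the integral equals `-(Γ(1-α)/α) z^α` on `Re z > 0`. Since
`|e^{-zy} - 1| ≤ min 2 (2|z|y)` for `Re z ≥ 0`, dominated convergence makes both sides continuous
on the closed half-plane, and the theorem is the value at the boundary point `z = -iξ`. -/

open MeasureTheory Real Complex Set Filter Topology

namespace StableSymbol

lemma norm_cexp_neg_mul_sub_one_le {z : ℂ} (hz : 0 ≤ z.re) {y : ℝ} (hy : 0 ≤ y) :
    ‖Complex.exp (-(z * y)) - 1‖ ≤ min 2 (2 * ‖z‖ * y) := by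
  have hnorm : ‖-(z * y)‖ = ‖z‖ * y := by
    rw [norm_neg, norm_mul, Complex.norm_real, Real.norm_of_nonneg hy]
  have hexp : ‖Complex.exp (-(z * y))‖ ≤ 1 := by
    rw [Complex.norm_exp, Real.exp_le_one_iff]
    simpa using mul_nonneg hz hy
  have htwo : ‖Complex.exp (-(z * y)) - 1‖ ≤ 2 :=
    calc ‖Complex.exp (-(z * y)) - 1‖ ≤ ‖Complex.exp (-(z * y))‖ + ‖(1 : ℂ)‖ := norm_sub_le _ _
      _ ≤ 2 := by rw [norm_one]; linarith
  refine le_min htwo ?_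
  rcases le_or_gt (‖z‖ * y) 1 with h | h
  · have := Complex.norm_exp_sub_one_le (hnorm.trans_le h)
    rwa [hnorm, ← mul_assoc] at this
  · linarith

lemma norm_cexp_neg_mul_sub_one_mul_rpow_le {z : ℂ} (hz : 0 ≤ z.re) {y : ℝ} (hy : 0 ≤ y) (s : ℝ) :
    ‖(Complex.exp (-(z * y)) - 1) * ((y ^ s : ℝ) : ℂ)‖ ≤ min 2 (2 * ‖z‖ * y) * y ^ s := by
  rw [norm_mul, Complex.norm_real, Real.norm_of_nonneg (Real.rpow_nonneg hy _)]
  exact mul_le_mul_of_nonneg_right (norm_cexp_neg_mul_sub_one_le hz hy) (Real.rpow_nonneg hy _)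

lemma integrableOn_min_mul_rpow {α a c : ℝ} (hα : 0 < α) (hα1 : α < 1) (ha : 0 ≤ a)
    (hc : 0 ≤ c) : IntegrableOn (fun y : ℝ => min a (c * y) * y ^ (-α - 1)) (Ioi 0) := by
  have hmeas : AEStronglyMeasurable (fun y : ℝ => min a (c * y) * y ^ (-α - 1)) volume := by
    fun_prop
  rw [← Ioc_union_Ioi_eq_Ioi zero_le_one]
  refine IntegrableOn.union ?_ ?_
  · have hdom : IntegrableOn (fun y : ℝ => c * y ^ (-α)) (Ioc 0 1) :=
      ((intervalIntegral.intervalIntegrable_rpow' (by linarith : (-1 : ℝ) < -α)).1).const_mul c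
    refine hdom.mono' hmeas.restrict ((ae_restrict_iff' measurableSet_Ioc).2 ?_)
    refine Eventually.of_forall fun (y : ℝ) (hy : y ∈ Ioc 0 1) => ?_
    rw [Real.norm_of_nonneg (by have := hy.1; positivity)]
    calc min a (c * y) * y ^ (-α - 1) ≤ c * y * y ^ (-α - 1) :=
          mul_le_mul_of_nonneg_right (min_le_right _ _) (Real.rpow_nonneg hy.1.le _)
      _ = c * y ^ (-α) := by
          rw [mul_assoc, ← Real.rpow_one_add' hy.1.le (by linarith)]; ring_nf
  · have hdom : IntegrableOn (fun y : ℝ => a * y ^ (-α - 1)) (Ioi 1) :=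
      (integrableOn_Ioi_rpow_of_lt (by linarith) one_pos).const_mul a
    refine hdom.mono' hmeas.restrict ((ae_restrict_iff' measurableSet_Ioi).2 ?_)
    refine Eventually.of_forall fun y (hy : 1 < y) => ?_
    rw [Real.norm_of_nonneg (by positivity)]
    gcongr
    exact min_le_left _ _

lemma integrableOn_cexp_neg_mul_sub_one_mul_rpow {α : ℝ} (hα : 0 < α) (hα1 : α < 1) {z : ℂ}
    (hz : 0 ≤ z.re) :
    IntegrableOn (fun y : ℝ => (Complex.exp (-(z * y)) - 1) * ((y ^ (-α - 1) : ℝ) : ℂ))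
      (Ioi 0) := by
  refine (integrableOn_min_mul_rpow hα hα1 zero_le_two (by positivity : 0 ≤ 2 * ‖z‖)).mono'
    (by fun_prop) ((ae_restrict_iff' measurableSet_Ioi).2 (Eventually.of_forall fun y hy => ?_))
  exact norm_cexp_neg_mul_sub_one_mul_rpow_le hz (le_of_lt hy) _

lemma integrableOn_cexp_neg_mul_mul_rpow {z : ℂ} (hz : 0 < z.re) {r : ℝ} (hr : -1 < r) :
    IntegrableOn (fun y : ℝ => Complex.exp (-(z * y)) * ((y ^ r : ℝ) : ℂ)) (Ioi 0) := by
  refine (integrableOn_rpow_mul_exp_neg_mul_rpow hr one_pos hz).mono' (by fun_prop)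
    ((ae_restrict_iff' measurableSet_Ioi).2 (Eventually.of_forall fun y (hy : 0 < y) => ?_))
  rw [norm_mul, Complex.norm_exp, Complex.norm_real, Real.norm_of_nonneg (by positivity),
    Real.rpow_one, mul_comm]
  simp

lemma differentiableOn_integral_cexp_neg_mul_mul_rpow {r : ℝ} (hr : -1 < r) :
    DifferentiableOn ℂ
      (fun z : ℂ => ∫ y in Ioi (0 : ℝ), Complex.exp (-(z * y)) * ((y ^ r : ℝ) : ℂ))
      {z | 0 < z.re} := by
  intro z₀ (hz₀ : 0 < z₀.re)
  have hre : ∀ z ∈ Metric.ball z₀ (z₀.re / 2), z₀.re / 2 ≤ z.re := fun z hz => by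
    have h := (Complex.abs_re_le_norm (z - z₀)).trans (mem_ball_iff_norm.1 hz).le
    rw [Complex.sub_re, abs_le] at h
    linarith [h.1]
  refine (hasDerivAt_integral_of_dominated_loc_of_deriv_le (μ := volume.restrict (Ioi 0))
    (F := fun z (y : ℝ) => Complex.exp (-(z * y)) * ((y ^ r : ℝ) : ℂ))
    (F' := fun z (y : ℝ) => Complex.exp (-(z * y)) * -(y : ℂ) * ((y ^ r : ℝ) : ℂ))
    (bound := fun y => y ^ (r + 1) * Real.exp (-(z₀.re / 2) * y ^ (1 : ℝ)))
    (Metric.ball_mem_nhds z₀ (half_pos hz₀)) (Eventually.of_forall fun z => by fun_prop)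
    (integrableOn_cexp_neg_mul_mul_rpow hz₀ hr) (by fun_prop) ?_
    (integrableOn_rpow_mul_exp_neg_mul_rpow (by linarith) one_pos (half_pos hz₀)) ?_).2
    |>.differentiableAt.differentiableWithinAt
  · refine (ae_restrict_iff' measurableSet_Ioi).2
      (Eventually.of_forall fun y (hy : 0 < y) z hz => ?_)
    rw [norm_mul, norm_mul, norm_neg, Complex.norm_exp, Complex.norm_real, Complex.norm_real,
      Real.norm_of_nonneg hy.le, Real.norm_of_nonneg (Real.rpow_nonneg hy.le _), Real.rpow_one,
      Real.rpow_add_one hy.ne', show (-(z * (y : ℂ))).re = -(z.re * y) by simp]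
    calc Real.exp (-(z.re * y)) * y * y ^ r = y ^ r * y * Real.exp (-(z.re * y)) := by ring
      _ ≤ y ^ r * y * Real.exp (-(z₀.re / 2) * y) := by gcongr; nlinarith [hre z hz]
  · refine Eventually.of_forall fun y z _ => ?_
    simpa using ((hasDerivAt_id z).mul_const (y : ℂ)).neg.cexp.mul_const ((y ^ r : ℝ) : ℂ)

lemma integral_cexp_neg_mul_mul_rpow {z : ℂ} (hz : 0 < z.re) {r : ℝ} (hr : -1 < r) :
    ∫ y in Ioi (0 : ℝ), Complex.exp (-(z * y)) * ((y ^ r : ℝ) : ℂ)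
      = (Real.Gamma (r + 1) : ℂ) * z ^ (-(r + 1 : ℂ)) := by
  have hU : IsPreconnected {w : ℂ | 0 < w.re} := (convex_halfSpace_re_gt 0).isPreconnected
  have hrhs : DifferentiableOn ℂ (fun w : ℂ => (Real.Gamma (r + 1) : ℂ) * w ^ (-(r + 1 : ℂ)))
      {w | 0 < w.re} := fun w (hw : 0 < w.re) =>
    ((differentiableAt_id.cpow_const (Or.inl hw)).const_mul _).differentiableWithinAt
  have hreal : ∀ x : ℝ, 0 < x → ∫ y in Ioi (0 : ℝ), Complex.exp (-(x * y)) * ((y ^ r : ℝ) : ℂ)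
      = (Real.Gamma (r + 1) : ℂ) * (x : ℂ) ^ (-(r + 1 : ℂ)) := by
    intro x hx
    have h := integral_cpow_mul_exp_neg_mul_Ioi (a := r + 1) (by simp; linarith) hx
    have harg : (x : ℂ).arg ≠ π := by
      simp [Complex.arg_ofReal_of_nonneg hx.le, Real.pi_ne_zero.symm]
    rw [one_div, Complex.inv_cpow _ _ harg,
      ← Complex.cpow_neg, add_sub_cancel_right, ← Complex.ofReal_one, ← Complex.ofReal_add,
      Complex.Gamma_ofReal] at h
    rw [mul_comm, show (-(r + 1 : ℂ)) = -((r + 1 : ℝ) : ℂ) by push_cast; ring, ← h]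
    refine setIntegral_congr_fun measurableSet_Ioi fun y (hy : 0 < y) => ?_
    rw [Complex.ofReal_cpow hy.le, mul_comm]
  have hfreq : ∃ᶠ w in 𝓝[≠] (1 : ℂ), ∫ y in Ioi (0 : ℝ), Complex.exp (-(w * y)) * ((y ^ r : ℝ) : ℂ)
      = (Real.Gamma (r + 1) : ℂ) * w ^ (-(r + 1 : ℂ)) := by
    have hmaps : Tendsto Complex.ofReal (𝓝[≠] 1) (𝓝[≠] 1) :=
      Complex.continuous_ofReal.continuousWithinAt.tendsto_nhdsWithin fun x hx => by simpa using hx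
    refine hmaps.frequently (Eventually.frequently ?_)
    filter_upwards [nhdsWithin_le_nhds (lt_mem_nhds one_pos)] with x hx
    simpa using hreal x hx
  exact ((differentiableOn_integral_cexp_neg_mul_mul_rpow hr).analyticOnNhd
      (isOpen_lt continuous_const Complex.continuous_re)).eqOn_of_preconnected_of_frequently_eq
    (hrhs.analyticOnNhd (isOpen_lt continuous_const Complex.continuous_re)) hU
    (by simp : (1 : ℂ) ∈ {w : ℂ | 0 < w.re}) hfreq hz

lemma tendsto_cexp_neg_mul_sub_one_mul_rpow_nhdsGT_zero {α : ℝ} (hα1 : α < 1) {z : ℂ}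
    (hz : 0 ≤ z.re) :
    Tendsto (fun y : ℝ => (Complex.exp (-(z * y)) - 1) * ((y ^ (-α) : ℝ) : ℂ)) (𝓝[>] 0) (𝓝 0) := by
  have hlim : Tendsto (fun y : ℝ => 2 * ‖z‖ * y ^ (1 - α)) (𝓝[>] 0) (𝓝 0) := by
    have : Tendsto (fun y : ℝ => 2 * ‖z‖ * y ^ (1 - α)) (𝓝[>] 0) (𝓝 (2 * ‖z‖ * 0 ^ (1 - α))) :=
      ((Real.continuousAt_rpow_const 0 (1 - α) (Or.inr (by linarith))).tendsto.const_mul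
        (2 * ‖z‖)).mono_left nhdsWithin_le_nhds
    rwa [Real.zero_rpow (by linarith), mul_zero] at this
  refine squeeze_zero_norm' ?_ hlim
  filter_upwards [self_mem_nhdsWithin] with y (hy : 0 < y)
  calc _ ≤ min 2 (2 * ‖z‖ * y) * y ^ (-α) := norm_cexp_neg_mul_sub_one_mul_rpow_le hz hy.le _
    _ ≤ 2 * ‖z‖ * y * y ^ (-α) := by gcongr; exact min_le_right _ _
    _ = 2 * ‖z‖ * y ^ (1 - α) := by
      rw [mul_assoc, ← Real.rpow_one_add' hy.le (by linarith)]; ring_nf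

lemma tendsto_cexp_neg_mul_sub_one_mul_rpow_atTop {α : ℝ} (hα : 0 < α) {z : ℂ} (hz : 0 ≤ z.re) :
    Tendsto (fun y : ℝ => (Complex.exp (-(z * y)) - 1) * ((y ^ (-α) : ℝ) : ℂ)) atTop (𝓝 0) := by
  have hlim : Tendsto (fun y : ℝ => 2 * y ^ (-α)) atTop (𝓝 0) := by
    simpa using (tendsto_rpow_neg_atTop hα).const_mul 2
  refine squeeze_zero_norm' ?_ hlim
  filter_upwards [eventually_ge_atTop 0] with y hy
  calc _ ≤ min 2 (2 * ‖z‖ * y) * y ^ (-α) := norm_cexp_neg_mul_sub_one_mul_rpow_le hz hy _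
    _ ≤ 2 * y ^ (-α) := by gcongr; exact min_le_left _ _

lemma integral_cexp_neg_mul_sub_one_mul_rpow_of_re_pos {α : ℝ} (hα : 0 < α) (hα1 : α < 1)
    {z : ℂ} (hz : 0 < z.re) :
    ∫ y in Ioi (0 : ℝ), (Complex.exp (-(z * y)) - 1) * ((y ^ (-α - 1) : ℝ) : ℂ)
      = -((Real.Gamma (1 - α) : ℂ) / α) * z ^ (α : ℂ) := by
  have hα0 : (α : ℂ) ≠ 0 := Complex.ofReal_ne_zero.2 hα.ne'
  have hu : ∀ y ∈ Ioi (0 : ℝ), HasDerivAt (fun t : ℝ => Complex.exp (-(z * t)) - 1)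
      (Complex.exp (-(z * y)) * -z) y := fun y _ => by
    simpa using (((hasDerivAt_id (y : ℂ)).const_mul z).neg.cexp.sub_const 1).comp_ofReal
  have hv : ∀ y ∈ Ioi (0 : ℝ), HasDerivAt (fun t : ℝ => ((t ^ (-α) : ℝ) : ℂ) * (-(α : ℂ))⁻¹)
      ((y ^ (-α - 1) : ℝ) : ℂ) y := fun y (hy : 0 < y) => by
    refine (((Real.hasDerivAt_rpow_const (p := -α) (Or.inl hy.ne')).ofReal_comp).mul_const
      (-(α : ℂ))⁻¹).congr_deriv ?_
    rw [Complex.ofReal_mul, Complex.ofReal_neg]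
    field_simp
  have hboundary : ∀ l : Filter ℝ, Tendsto (fun y : ℝ => (Complex.exp (-(z * y)) - 1) *
      ((y ^ (-α) : ℝ) : ℂ)) l (𝓝 0) → Tendsto ((fun t : ℝ => Complex.exp (-(z * t)) - 1) *
      fun t : ℝ => ((t ^ (-α) : ℝ) : ℂ) * (-(α : ℂ))⁻¹) l (𝓝 0) := fun l h => by
    simpa [Pi.mul_def, mul_assoc] using h.mul_const (-(α : ℂ))⁻¹
  have hG := integral_cexp_neg_mul_mul_rpow hz (r := -α) (by linarith)
  have hint := integrableOn_cexp_neg_mul_mul_rpow hz (r := -α) (by linarith)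
  have hibp := integral_Ioi_mul_deriv_eq_deriv_mul hu hv
    (integrableOn_cexp_neg_mul_sub_one_mul_rpow hα hα1 hz.le)
    (IntegrableOn.congr_fun (hint.const_mul (-z * (-(α : ℂ))⁻¹))
      (fun y _ => by simp only [Pi.mul_apply]; ring) measurableSet_Ioi)
    (hboundary _ (tendsto_cexp_neg_mul_sub_one_mul_rpow_nhdsGT_zero hα1 hz.le))
    (hboundary _ (tendsto_cexp_neg_mul_sub_one_mul_rpow_atTop hα hz.le))
  have hz0 : z ≠ 0 := fun h => by simp [h] at hz
  have hpow : z ^ (α : ℂ) = z * z ^ (-(((-α : ℝ) : ℂ) + 1)) := by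
    conv_lhs => rw [show (α : ℂ) = 1 + -(((-α : ℝ) : ℂ) + 1) by push_cast; ring]
    rw [Complex.cpow_add _ _ hz0, Complex.cpow_one]
  have hfactor : ∫ y in Ioi (0 : ℝ),
        Complex.exp (-(z * y)) * -z * (((y ^ (-α) : ℝ) : ℂ) * (-(α : ℂ))⁻¹)
      = -z * (-(α : ℂ))⁻¹ * ∫ y in Ioi (0 : ℝ), Complex.exp (-(z * y)) * ((y ^ (-α) : ℝ) : ℂ) := by
    rw [← integral_const_mul]
    congr 1 with y
    ring
  rw [hibp, sub_zero, zero_sub, hfactor, hG, hpow, neg_add_eq_sub]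
  field_simp

lemma continuousOn_integral_cexp_neg_mul_sub_one_mul_rpow {α : ℝ} (hα : 0 < α) (hα1 : α < 1) :
    ContinuousOn (fun z : ℂ => ∫ y in Ioi (0 : ℝ),
      (Complex.exp (-(z * y)) - 1) * ((y ^ (-α - 1) : ℝ) : ℂ)) {z | 0 ≤ z.re} := by
  intro z₀ _
  refine continuousWithinAt_of_dominated (Eventually.of_forall fun z => by fun_prop) ?_
    (integrableOn_min_mul_rpow hα hα1 zero_le_two (by positivity : 0 ≤ 2 * (‖z₀‖ + 1)))
    (Eventually.of_forall fun y => by fun_prop)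
  filter_upwards [self_mem_nhdsWithin, nhdsWithin_le_nhds (Metric.ball_mem_nhds z₀ one_pos)]
    with z (hz : 0 ≤ z.re) hzball
  refine (ae_restrict_iff' measurableSet_Ioi).2 (Eventually.of_forall fun y (hy : 0 < y) => ?_)
  have hnorm : ‖z‖ ≤ ‖z₀‖ + 1 :=
    (norm_le_norm_add_norm_sub' z z₀).trans (by linarith [mem_ball_iff_norm.1 hzball])
  refine (norm_cexp_neg_mul_sub_one_mul_rpow_le hz hy.le _).trans ?_
  gcongr

lemma integral_cexp_neg_mul_sub_one_mul_rpow {α : ℝ} (hα : 0 < α) (hα1 : α < 1) {z : ℂ}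
    (hz : 0 ≤ z.re) :
    ∫ y in Ioi (0 : ℝ), (Complex.exp (-(z * y)) - 1) * ((y ^ (-α - 1) : ℝ) : ℂ)
      = -((Real.Gamma (1 - α) : ℂ) / α) * z ^ (α : ℂ) := by
  have hrhs : ContinuousOn (fun w : ℂ => -((Real.Gamma (1 - α) : ℂ) / α) * w ^ (α : ℂ))
      {w | 0 ≤ w.re} := fun w (hw : 0 ≤ w.re) =>
    ((continuousAt_cpow_const_of_re_pos (Or.inl hw) (by simpa using hα)).const_mul
      _).continuousWithinAt
  exact EqOn.of_subset_closure (s := {w : ℂ | 0 < w.re})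
    (fun w (hw : 0 < w.re) => integral_cexp_neg_mul_sub_one_mul_rpow_of_re_pos hα hα1 hw)
    (continuousOn_integral_cexp_neg_mul_sub_one_mul_rpow hα hα1) hrhs
    (fun w (hw : 0 < w.re) => hw.le) (closure_setOfPred_lt_re 0).ge hz

lemma log_neg_I_mul_ofReal {ξ : ℝ} (hξ : ξ ≠ 0) :
    Complex.log (-(Complex.I * ξ)) = Real.log |ξ| - Complex.I * (π / 2) * (Real.sign ξ : ℝ) := by
  have hnorm : ‖-(Complex.I * ξ)‖ = |ξ| := by simp
  rw [Complex.log, hnorm]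
  rcases hξ.lt_or_gt with hneg | hpos
  · have harg : (-(Complex.I * ξ)).arg = π / 2 := by
      rw [show -(Complex.I * ξ) = ((-ξ : ℝ) : ℂ) * Complex.I by push_cast; ring,
        Complex.arg_real_mul _ (neg_pos.2 hneg), Complex.arg_I]
    rw [harg, Real.sign_of_neg hneg]
    push_cast
    ring
  · have harg : (-(Complex.I * ξ)).arg = -(π / 2) := by
      rw [show -(Complex.I * ξ) = (ξ : ℂ) * -Complex.I by ring,
        Complex.arg_real_mul _ hpos, Complex.arg_neg_I]
    rw [harg, Real.sign_of_pos hpos]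
    push_cast
    ring

lemma neg_I_mul_ofReal_cpow {α : ℝ} (hα : α ≠ 0) (ξ : ℝ) :
    (-(Complex.I * ξ)) ^ (α : ℂ)
      = ((|ξ| ^ α : ℝ) : ℂ) * Complex.exp (-Complex.I * (π * α / 2) * (Real.sign ξ : ℝ)) := by
  rcases eq_or_ne ξ 0 with rfl | hξ
  · simp [Complex.zero_cpow, Real.zero_rpow hα, hα]
  rw [Complex.cpow_def_of_ne_zero (by simpa using hξ), log_neg_I_mul_ofReal hξ,
    Real.rpow_def_of_pos (abs_pos.2 hξ), Complex.ofReal_exp, ← Complex.exp_add]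
  push_cast
  ring_nf

end StableSymbol

open StableSymbol in
theorem stmt_4_general (α ξ : ℝ) (hα : 0 < α) (hα1 : α < 1) :
    ((α / Real.Gamma (1 - α) : ℝ) : ℂ) *
        ∫ y in Set.Ioi (0 : ℝ),
          (Complex.exp (Complex.I * ξ * y) - 1) * ((y ^ (-α - 1) : ℝ) : ℂ)
      = -(((|ξ| ^ α : ℝ) : ℂ) *
          Complex.exp (-Complex.I * (π * α / 2) * (Real.sign ξ : ℝ))) := by
  have hΓ : (Real.Gamma (1 - α) : ℂ) ≠ 0 :=
    Complex.ofReal_ne_zero.2 (Real.Gamma_pos_of_pos (by linarith)).ne'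
  have hα0 : (α : ℂ) ≠ 0 := Complex.ofReal_ne_zero.2 hα.ne'
  have hexp : ∀ y : ℝ, Complex.I * ξ * y = -(-(Complex.I * ξ) * y) := fun y => by ring
  simp_rw [hexp]
  rw [integral_cexp_neg_mul_sub_one_mul_rpow hα hα1 (by simp), neg_I_mul_ofReal_cpow hα.ne']
  push_cast
  field_simp

/-- For `α ∈ (0,1)` and `ξ ≠ 0`,
`(α/Γ(1−α))·∫_0^∞ (e^{iξy} − 1)·y^(−α−1) dy = −(−iξ)^α`, where
`(−iξ)^α = |ξ|^α·e^{−i(πα/2)·sgn ξ}`. -/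
theorem stmt_4 (α ξ : ℝ) (hα : 0 < α) (hα1 : α < 1) (hξ : ξ ≠ 0) :
    ((α / Real.Gamma (1 - α) : ℝ) : ℂ) *
        ∫ y in Set.Ioi (0 : ℝ),
          (Complex.exp (Complex.I * ξ * y) - 1) * ((y ^ (-α - 1) : ℝ) : ℂ)
      = -(((|ξ| ^ α : ℝ) : ℂ) *
          Complex.exp (-Complex.I * (π * α / 2) * (Real.sign ξ : ℝ))) :=
  stmt_4_general α ξ hα hα1
end
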